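/- Let ζ₀ be a zero of ω_m with ζ₀ ∉ {z_{ν+1},…,z_λ}, D(ζ₀) ≠ 0, and |ζ₀| = |z_{ν+1}|. Then along n ∈ Λ_m, the error r(ζ₀) − π_{n,λ−1}(ζ₀) = ζ₀^{n+λ}/(D(ζ₀)V_{n+λ}(ζ₀)) does not converge to 0. -/

import Mathlib

/-! Along `k ≡ m (mod σ)` every dominant pole satisfies `z_j^k = z_j^m (z_1^σ)^q`, so the dominant
part of `V_k(ζ₀)` factors through `ω_m(ζ₀) = 0`. What remains is an exponential sum in which
`z_{ν+1}` is the only term of maximal modulus, so `z_{ν+1}^k / V_k(ζ₀)` has a nonzero limit.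
As `|ζ₀| = |z_{ν+1}|`, the norm of the error then tends to a nonzero limit as well. -/

open Polynomial Finset Filter Topology

variable {ι : Type*} [DecidableEq ι]

theorem Finset.prod_erase_eq_prod_erase_mul_prod_sdiff {M : Type*} [CommMonoid M]
    {s t : Finset ι} (hts : t ⊆ s) {j : ι} (hj : j ∈ t) (f : ι → M) :
    ∏ i ∈ s.erase j, f i = (∏ i ∈ t.erase j, f i) * ∏ i ∈ s \ t, f i := by
  rw [← prod_sdiff (erase_subset_erase j hts), ← erase_sdiff_distrib,
    erase_eq_of_notMem fun h => (mem_sdiff.1 h).2 hj, mul_comm]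

theorem sum_mul_pow_mul_prod_erase_eq_of_pow_eq {R : Type*} [CommRing R]
    {s t : Finset ι} (hts : t ⊆ s) (c z : ι → R) (ζ ρ : R) {σ : ℕ}
    (hz : ∀ j ∈ t, z j ^ σ = ρ) (m q : ℕ) :
    ∑ j ∈ t, c j * z j ^ (m + σ * q) * ∏ i ∈ s.erase j, (ζ - z i) =
      ρ ^ q * (∏ i ∈ s \ t, (ζ - z i)) *
        ∑ j ∈ t, c j * z j ^ m * ∏ i ∈ t.erase j, (ζ - z i) := by
  rw [mul_sum]
  refine sum_congr rfl fun j hj => ?_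
  rw [prod_erase_eq_prod_erase_mul_prod_sdiff hts hj, pow_add, pow_mul, hz j hj]
  ring

theorem sum_mul_pow_mul_prod_erase_eq_sum_sdiff {R : Type*} [CommRing R]
    {s t : Finset ι} (hts : t ⊆ s) (c z : ι → R) (ζ ρ : R) {σ m : ℕ}
    (hz : ∀ j ∈ t, z j ^ σ = ρ)
    (hω : ∑ j ∈ t, c j * z j ^ m * ∏ i ∈ t.erase j, (ζ - z i) = 0) (q : ℕ) :
    ∑ j ∈ s, c j * z j ^ (m + σ * q) * ∏ i ∈ s.erase j, (ζ - z i) =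
      ∑ j ∈ s \ t, c j * z j ^ (m + σ * q) * ∏ i ∈ s.erase j, (ζ - z i) := by
  rw [← sum_sdiff hts, sum_mul_pow_mul_prod_erase_eq_of_pow_eq hts c z ζ ρ hz, hω, mul_zero,
    add_zero]

theorem tendsto_pow_div_sum_mul_pow {𝕜 : Type*} [NormedField 𝕜] (s : Finset ι) (a w : ι → 𝕜)
    {i₀ : ι} (hi₀ : i₀ ∈ s) (ha₀ : a i₀ ≠ 0) (hw₀ : w i₀ ≠ 0)
    (hw : ∀ i ∈ s, i ≠ i₀ → ‖w i‖ < ‖w i₀‖) :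
    Tendsto (fun k => w i₀ ^ k / ∑ i ∈ s, a i * w i ^ k) atTop (𝓝 (a i₀)⁻¹) := by
  have hterm : ∀ i ∈ s, Tendsto (fun k => a i * (w i / w i₀) ^ k) atTop
      (𝓝 (if i = i₀ then a i₀ else 0)) := by
    intro i hi
    split_ifs with h
    · subst h
      simp [div_self hw₀]
    · simpa using (tendsto_pow_atTop_nhds_zero_of_norm_lt_one (by
        rw [norm_div, div_lt_one (norm_pos_iff.2 hw₀)]; exact hw i hi h)).const_mul (a i)
  have hsum := tendsto_finsetSum s hterm
  rw [sum_ite_eq' s i₀, if_pos hi₀] at hsum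
  refine (hsum.inv₀ ha₀).congr fun k => ?_
  rw [← inv_div, sum_div]
  simp_rw [div_pow, mul_div_assoc]

theorem neBot_atTop_inf_principal_add_mod_eq {σ m : ℕ} (hm : m < σ) (l : ℕ) :
    (atTop ⊓ 𝓟 {n | (n + l) % σ = m % σ}).NeBot := by
  refine frequently_iff_neBot.1 ?_
  have h := Nat.frequently_mod_eq hm
  rw [← map_add_atTop_eq_nat l, frequently_map] at h
  simpa only [Nat.mod_eq_of_lt hm] using h

theorem stmt9 (lam nu sig mm : ℕ) (hnul : nu + 1 < lam)
    (hmm : mm < sig)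
    (z Cc : Fin lam → ℂ)
    (hC : ∀ j, Cc j ≠ 0)
    (hroot : ∀ j : Fin lam, (j : ℕ) < nu → z j ^ sig = z ⟨0, by omega⟩ ^ sig)
    (hdrop1 : ∀ j : Fin lam, nu + 1 ≤ (j : ℕ) →
      ‖z j‖ < ‖z ⟨nu, by omega⟩‖)
    (ζ₀ : ℂ)
    (habs : ‖ζ₀‖ = ‖z ⟨nu, by omega⟩‖) :
    let D : Polynomial ℂ := ∏ i, (Polynomial.X - Polynomial.C (z i))
    let Dj : Fin lam → Polynomial ℂ :=
      fun j => ∏ i ∈ Finset.univ.erase j, (Polynomial.X - Polynomial.C (z i))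
    let V : ℕ → Polynomial ℂ := fun k => ∑ j, Polynomial.C (Cc j * z j ^ k) * Dj j
    let dom : Finset (Fin lam) := Finset.univ.filter (fun j => (j : ℕ) < nu)
    let ω : Polynomial ℂ := ∑ k ∈ dom, Polynomial.C (Cc k * z k ^ mm) *
      ∏ i ∈ dom.erase k, (Polynomial.X - Polynomial.C (z i))
    let Λ : Filter ℕ := atTop ⊓ Filter.principal {n | (n + lam) % sig = mm % sig}
    ω.eval ζ₀ = 0 → D.eval ζ₀ ≠ 0 →
    ¬ Tendsto (fun n : ℕ => ζ₀ ^ (n + lam) / (D.eval ζ₀ * (V (n + lam)).eval ζ₀)) Λ (𝓝 0) := by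
  intro D Dj V dom ω Λ hω hD htend
  have hΛ : Λ.NeBot := neBot_atTop_inf_principal_add_mod_eq hmm lam
  set jν : Fin lam := ⟨nu, by omega⟩
  set a : Fin lam → ℂ := fun j => Cc j * ∏ i ∈ univ.erase j, (ζ₀ - z i)
  have hpole : ∀ i, ζ₀ - z i ≠ 0 :=
    fun i => prod_ne_zero_iff.1 (by simpa [D, eval_prod] using hD) i (mem_univ i)
  have hV : ∀ᶠ n in Λ, (V (n + lam)).eval ζ₀ = ∑ j ∈ univ \ dom, a j * z j ^ (n + lam) := by
    refine eventually_inf_principal.2 (.of_forall fun n (hn : (n + lam) % sig = mm % sig) => ?_)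
    rw [Nat.mod_eq_of_lt hmm] at hn
    have hω' : ∑ j ∈ dom, Cc j * z j ^ mm * ∏ i ∈ dom.erase j, (ζ₀ - z i) = 0 := by
      simpa [ω, eval_finsetSum, eval_prod] using hω
    have hsum := sum_mul_pow_mul_prod_erase_eq_sum_sdiff (subset_univ dom) Cc z ζ₀ _
      (fun j hj => hroot j (mem_filter.1 hj).2) hω' ((n + lam) / sig)
    rw [← hn, Nat.mod_add_div] at hsum
    simp only [V, Dj, eval_finsetSum, eval_mul, eval_C, eval_prod, eval_sub, eval_X, a]
    rw [hsum]
    exact sum_congr rfl fun j _ => mul_right_comm _ _ _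
  have hjν : jν ∈ univ \ dom := by simp [dom, jν]
  have hdom : ∀ i ∈ univ \ dom, i ≠ jν → ‖z i‖ < ‖z jν‖ := fun i hi hne =>
    hdrop1 i (by simp [dom, jν, Fin.ext_iff] at hi hne; omega)
  have hzν : z jν ≠ 0 := norm_pos_iff.1 ((norm_nonneg _).trans_lt (hdrop1 ⟨nu + 1, hnul⟩ le_rfl))
  have haν : a jν ≠ 0 := mul_ne_zero (hC jν) (prod_ne_zero_iff.2 fun i _ => hpole i)
  have hlim := ((tendsto_pow_div_sum_mul_pow _ a z hjν haν hzν hdom).norm.comp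
    (tendsto_add_atTop_nat lam)).mono_left (inf_le_left : Λ ≤ atTop) |>.div_const ‖D.eval ζ₀‖
  have hnorm := tendsto_nhds_unique htend.norm (hlim.congr' (hV.mono fun n hn => by
    simp only [Function.comp_apply, norm_div, norm_mul, norm_pow, hn, habs]; ring))
  rw [norm_zero, norm_inv] at hnorm
  exact (div_pos (inv_pos.2 (norm_pos_iff.2 haν)) (norm_pos_iff.2 hD)).ne hnorm
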